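/- Let G be a compact connected abelian Hausdorff topological group with identity element e, let X be a connected Hausdorff topological space, and let p : X → G be a k-sheeted covering map for some positive integer k. Then for every point ẽ ∈ p⁻¹(e) there exists an abelian group structure on X with identity element ẽ such that X, with its given topology, is a topological group and p : X → G is a group homomorphism of abelian groups. -/

import Mathlib

/-- A `k`-sheeted covering map: a continuous surjection such that every point of the base
has an open neighborhood `W` whose preimage is partitioned into `k` disjoint open sets,
each mapped homeomorphically onto `W` by `p`. -/
def IsCoveringOfDegree {X Y : Type*} [TopologicalSpace X] [TopologicalSpace Y]
    (k : ℕ) (p : X → Y) : Prop :=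
  Continuous p ∧ Function.Surjective p ∧
    ∀ y : Y, ∃ W : Set Y, IsOpen W ∧ y ∈ W ∧
      ∃ V : Fin k → Set X,
        (∀ i, IsOpen (V i)) ∧
        (Pairwise fun i j => Disjoint (V i) (V j)) ∧
        (⋃ i, V i) = p ⁻¹' W ∧
        ∀ i, ∃ e : (V i) ≃ₜ W, ∀ x : (V i), p x = e x

/-!
The product is a lift `μ : X × X → X` of `(x, y) ↦ p x * p y` through `p` with
`μ (x, e') = x` and `μ (e', y) = y`. The base need not be locally path-connected (think of a
solenoid), so the lift is not built along paths but by continuation in the first variable: since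
`X` is compact, finitely many evenly covered pieces let a lift of `p t * p ·` be transported to
one of `p t' * p ·` for all `t'` near `t`, so the parameters admitting a normalized lift form a
clopen set. Commutativity and associativity follow from uniqueness of lifts on connected spaces.
Each translation `μ (x, ·)` lifts a homeomorphism of `G`, hence is a local homeomorphism of the
compact connected space `X` and is surjective; this gives inverses, and inversion is continuous
because its graph `{(x, y) | μ (x, y) = e'}` is closed and `X` is compact.
-/

open Set Filter Topology

section CoveringLifts

variable {E B : Type*} [TopologicalSpace E] {p : E → B} {k : ℕ}

section LocallyInjective

variable {A T Z : Type*} [TopologicalSpace A] [TopologicalSpace T] [TopologicalSpace Z]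

theorem IsLocallyInjective.eventually_eq_iff_of_comp_eq [T2Space E] (hp : IsLocallyInjective p)
    {φ ψ : Z → E} {z₀ : Z} (hφ : ContinuousAt φ z₀) (hψ : ContinuousAt ψ z₀)
    (h : ∀ᶠ z in 𝓝 z₀, p (φ z) = p (ψ z)) : ∀ᶠ z in 𝓝 z₀, (φ z = ψ z ↔ φ z₀ = ψ z₀) := by
  by_cases h₀ : φ z₀ = ψ z₀
  · obtain ⟨U, hU, hφU, hinj⟩ := hp (φ z₀)
    filter_upwards [hφ (hU.mem_nhds hφU), hψ (hU.mem_nhds (h₀ ▸ hφU)), h] with z h₁ h₂ h₃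
    exact iff_of_true (hinj h₁ h₂ h₃) h₀
  · filter_upwards [(hφ.ne_iff_eventually_ne hψ).1 h₀] with z hz
    exact iff_of_false hz h₀

theorem IsLocallyInjective.eventually_forall_eq_iff_of_comp_eq [T2Space E]
    (hp : IsLocallyInjective p) {K : Set A} (hK : IsCompact K) {φ ψ : T × A → E} {t₀ : T}
    (hφ : ∀ a ∈ K, ContinuousAt φ (t₀, a)) (hψ : ∀ a ∈ K, ContinuousAt ψ (t₀, a))
    (h : ∀ a ∈ K, ∀ᶠ z in 𝓝 (t₀, a), p (φ z) = p (ψ z)) :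
    ∀ᶠ t in 𝓝 t₀, ∀ a ∈ K, (φ (t, a) = ψ (t, a) ↔ φ (t₀, a) = ψ (t₀, a)) := by
  refine hK.eventually_forall_of_forall_eventually fun a ha => ?_
  have hslice : ContinuousAt (fun z : T × A => (t₀, z.2)) (t₀, a) :=
    (continuous_const.prodMk continuous_snd).continuousAt
  filter_upwards [hp.eventually_eq_iff_of_comp_eq (hφ a ha) (hψ a ha) (h a ha),
    hp.eventually_eq_iff_of_comp_eq ((hφ a ha).comp_of_eq hslice rfl)
      ((hψ a ha).comp_of_eq hslice rfl) (hslice.eventually (h a ha))] with z h₁ h₂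
  exact h₁.trans h₂.symm

end LocallyInjective

variable [TopologicalSpace B]

structure IsLocalSectionFamily {ι : Type*} (p : E → B) (W : Set B) (σ : ι → B → E) : Prop where
  continuousOn : ∀ i, ContinuousOn (σ i) W
  proj_apply : ∀ i, ∀ b ∈ W, p (σ i b) = b
  exists_eq : ∀ e, p e ∈ W → ∃ i, σ i (p e) = e

namespace IsCoveringOfDegree

theorem isLocalHomeomorph (hp : IsCoveringOfDegree k p) : IsLocalHomeomorph p := by
  refine isLocalHomeomorph_iff_isOpenEmbedding_restrict.2 fun x => ?_
  obtain ⟨W, hW, hxW, V, hV, -, hVW, he⟩ := hp.2.2 (p x)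
  obtain ⟨i, hxi⟩ := mem_iUnion.1 (hVW ▸ hxW : x ∈ ⋃ i, V i)
  obtain ⟨e, he⟩ := he i
  refine ⟨V i, (hV i).mem_nhds hxi, ?_⟩
  have : (V i).domRestrict p = Subtype.val ∘ e := funext he
  exact this ▸ hW.isOpenEmbedding_subtypeVal.comp e.isOpenEmbedding

theorem exists_isLocalSectionFamily (hp : IsCoveringOfDegree k p) (b : B) :
    ∃ W, IsOpen W ∧ b ∈ W ∧ ∃ σ : Fin k → B → E, IsLocalSectionFamily p W σ := by
  obtain ⟨W, hW, hbW, V, -, -, hVW, he⟩ := hp.2.2 b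
  choose e he using he
  classical
  -- outside `W` the sections take an arbitrary value, here the one they take at `b`
  let σ i (b' : B) : E := (e i).symm (if h : b' ∈ W then ⟨b', h⟩ else ⟨b, hbW⟩)
  have hσ : ∀ i, ∀ b' (h : b' ∈ W), σ i b' = (e i).symm ⟨b', h⟩ := fun i b' h => by
    simp only [σ, dif_pos h]
  refine ⟨W, hW, hbW, σ, fun i => ?_, fun i b' h => ?_, fun x hx => ?_⟩
  · rw [continuousOn_iff_continuous_domRestrict]
    convert continuous_subtype_val.comp (e i).symm.continuous using 1
    exact funext fun w => hσ i w w.2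
  · rw [hσ i b' h, he, Homeomorph.apply_symm_apply]
  · obtain ⟨i, hxi⟩ := mem_iUnion.1 (hVW ▸ hx : x ∈ ⋃ i, V i)
    refine ⟨i, ?_⟩
    rw [hσ i _ hx, show (⟨p x, hx⟩ : W) = e i ⟨x, hxi⟩ from Subtype.ext (he i ⟨x, hxi⟩),
      Homeomorph.symm_apply_apply]

theorem eq_of_comp_eq [T2Space E] (hp : IsCoveringOfDegree k p) {A : Type*} [TopologicalSpace A]
    [PreconnectedSpace A] {g₁ g₂ : A → E} (h₁ : Continuous g₁) (h₂ : Continuous g₂)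
    (he : p ∘ g₁ = p ∘ g₂) (a : A) (ha : g₁ a = g₂ a) : g₁ = g₂ :=
  (T2Space.isSeparatedMap p).eq_of_comp_eq hp.isLocalHomeomorph.isLocallyInjective h₁ h₂ he a ha

theorem compactSpace [CompactSpace B] [RegularSpace B] (hp : IsCoveringOfDegree k p) :
    CompactSpace E := by
  choose W hW hbW σ hσ using hp.exists_isLocalSectionFamily
  choose K hK hKc hKW using fun b => exists_mem_nhds_isClosed_subset ((hW b).mem_nhds (hbW b))
  obtain ⟨s, -, hs⟩ := isCompact_univ.elim_nhds_subcover K fun b _ => hK b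
  have hcover : (univ : Set E) ⊆ ⋃ b ∈ s, ⋃ i, σ b i '' K b := fun e _ => by
    obtain ⟨b, hb, hpe⟩ := mem_iUnion₂.1 (hs (mem_univ (p e)))
    obtain ⟨i, hi⟩ := (hσ b).exists_eq e (hKW b hpe)
    exact mem_biUnion hb (mem_iUnion.2 ⟨i, p e, hpe, hi⟩)
  have hpieces : ∀ b i, IsCompact (σ b i '' K b) := fun b i =>
    (hKc b).isCompact.image_of_continuousOn (((hσ b).continuousOn i).mono (hKW b))
  exact ⟨(s.isCompact_biUnion fun b _ => isCompact_iUnion (hpieces b)).of_isClosed_subset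
    isClosed_univ hcover⟩

end IsCoveringOfDegree

section Atlas

variable {A T : Type*} [TopologicalSpace A] [TopologicalSpace T]

/-- The data needed to transport a lift of `H (t₁, ·)` to lifts of `H (t, ·)` for all `t ∈ N`. -/
structure LiftAtlas (ι : Type*) (p : E → B) (H : T × A → B) (N : Set T) where
  centers : Finset A
  piece : A → Set A
  base : A → Set B
  sec : A → ι → B → E
  isClosed_piece : ∀ j, IsClosed (piece j)
  exists_mem_piece : ∀ a, ∃ j ∈ centers, a ∈ piece j
  isOpen_base : ∀ j, IsOpen (base j)
  isLocalSectionFamily : ∀ j, IsLocalSectionFamily p (base j) (sec j)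
  mapsTo : ∀ j ∈ centers, ∀ t ∈ N, ∀ a ∈ piece j, H (t, a) ∈ base j
  sec_eq_iff : ∀ j ∈ centers, ∀ l ∈ centers, ∀ i i', ∀ a ∈ piece j ∩ piece l, ∀ t ∈ N, ∀ t' ∈ N,
    (sec j i (H (t, a)) = sec l i' (H (t, a)) ↔ sec j i (H (t', a)) = sec l i' (H (t', a)))

theorem IsCoveringOfDegree.exists_liftAtlas [T2Space E] [CompactSpace A] [RegularSpace A]
    [RegularSpace T] (hp : IsCoveringOfDegree k p) {H : T × A → B} (hH : Continuous H) (t₀ : T) :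
    ∃ N ∈ 𝓝 t₀, IsClosed N ∧ Nonempty (LiftAtlas (Fin k) p H N) := by
  choose W hW hbW σ hσ using fun a => hp.exists_isLocalSectionFamily (H (t₀, a))
  have hC : ∀ a, ∃ C ∈ 𝓝 a, IsClosed C ∧ ∀ᶠ t in 𝓝 t₀, ∀ a' ∈ C, H (t, a') ∈ W a := fun a => by
    obtain ⟨u, hu, v, hv, huv⟩ :=
      mem_nhds_prod_iff.1 (hH.continuousAt.preimage_mem_nhds ((hW a).mem_nhds (hbW a)))
    obtain ⟨C, hC, hCc, hCv⟩ := exists_mem_nhds_isClosed_subset hv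
    exact ⟨C, hC, hCc, mem_of_superset hu fun t ht a' ha' => huv ⟨ht, hCv ha'⟩⟩
  choose C hC hCc hCW using hC
  obtain ⟨s, -, hs⟩ := isCompact_univ.elim_nhds_subcover C fun a _ => hC a
  have hmaps : ∀ᶠ t in 𝓝 t₀, ∀ j ∈ s, ∀ a ∈ C j, H (t, a) ∈ W j :=
    (eventually_all_finset s).2 fun j _ => hCW j
  have hcont : ∀ j i, ∀ a ∈ C j, ContinuousAt (fun z => σ j i (H z)) (t₀, a) := fun j i a ha =>
    (((hσ j).continuousOn i).continuousAt ((hW j).mem_nhds ((hCW j).self_of_nhds a ha))).comp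
      hH.continuousAt
  have htrans : ∀ᶠ t in 𝓝 t₀, ∀ j ∈ s, ∀ l ∈ s, ∀ i i', ∀ a ∈ C j ∩ C l,
      (σ j i (H (t, a)) = σ l i' (H (t, a)) ↔ σ j i (H (t₀, a)) = σ l i' (H (t₀, a))) := by
    refine (eventually_all_finset s).2 fun j _ => (eventually_all_finset s).2 fun l _ =>
      eventually_all.2 fun i => eventually_all.2 fun i' => ?_
    refine hp.isLocalHomeomorph.isLocallyInjective.eventually_forall_eq_iff_of_comp_eq
      ((hCc j).inter (hCc l)).isCompact (fun a ha => hcont j i a ha.1)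
      (fun a ha => hcont l i' a ha.2) fun a ha => ?_
    filter_upwards [hH.continuousAt.preimage_mem_nhds (((hW j).inter (hW l)).mem_nhds
      ⟨(hCW j).self_of_nhds a ha.1, (hCW l).self_of_nhds a ha.2⟩)] with z hz
    rw [(hσ j).proj_apply i _ hz.1, (hσ l).proj_apply i' _ hz.2]
  obtain ⟨N, hN, hNc, hNsub⟩ := exists_mem_nhds_isClosed_subset (hmaps.and htrans)
  refine ⟨N, hN, hNc, ⟨s, C, W, σ, hCc, fun a => ?_, hW, hσ, fun j hj t ht => (hNsub ht).1 j hj,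
    fun j hj l hl i i' a ha t ht t' ht' => ?_⟩⟩
  · simpa using hs (mem_univ a)
  · exact ((hNsub ht).2 j hj l hl i i' a ha).trans ((hNsub ht').2 j hj l hl i i' a ha).symm

end Atlas

section Transport

variable {A T ι : Type*} [TopologicalSpace A] [TopologicalSpace T] {H : T × A → B} {N : Set T}

theorem LiftAtlas.exists_lift [Finite ι] [T2Space E] (𝒜 : LiftAtlas ι p H N) (hH : Continuous H)
    (hN : IsClosed N) {t₁ : T} (ht₁ : t₁ ∈ N) {f : A → E} (hf : Continuous f)
    (hfH : ∀ a, p (f a) = H (t₁, a)) :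
    ∃ F : T × A → E, ContinuousOn F (N ×ˢ univ) ∧ (∀ t ∈ N, ∀ a, p (F (t, a)) = H (t, a)) ∧
      (∀ a, F (t₁, a) = f a) ∧ ∀ j ∈ 𝒜.centers, ∀ i, ∀ a ∈ 𝒜.piece j,
        f a = 𝒜.sec j i (H (t₁, a)) → ∀ t ∈ N, F (t, a) = 𝒜.sec j i (H (t, a)) := by
  have hsheet : ∀ a, ∃ j ∈ 𝒜.centers, a ∈ 𝒜.piece j ∧ ∃ i, f a = 𝒜.sec j i (H (t₁, a)) :=
    fun a => by
      obtain ⟨j, hj, ha⟩ := 𝒜.exists_mem_piece a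
      obtain ⟨i, hi⟩ := (𝒜.isLocalSectionFamily j).exists_eq (f a)
        (hfH a ▸ 𝒜.mapsTo j hj t₁ ht₁ a ha)
      exact ⟨j, hj, ha, i, by rw [← hfH, hi]⟩
  choose J hJ hJa I hI using hsheet
  let F (z : T × A) : E := 𝒜.sec (J z.2) (I z.2) (H z)
  have hF : ∀ j ∈ 𝒜.centers, ∀ i, ∀ a ∈ 𝒜.piece j,
      f a = 𝒜.sec j i (H (t₁, a)) → ∀ t ∈ N, F (t, a) = 𝒜.sec j i (H (t, a)) :=
    fun j hj i a ha hfa t ht =>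
      (𝒜.sec_eq_iff _ (hJ a) j hj (I a) i a ⟨hJa a, ha⟩ t₁ ht₁ t ht).1 ((hI a).symm.trans hfa)
  refine ⟨F, ?_, fun t ht a => (𝒜.isLocalSectionFamily _).proj_apply _ _
    (𝒜.mapsTo _ (hJ a) t ht a (hJa a)), fun a => (hI a).symm, hF⟩
  have hsec : ∀ j ∈ 𝒜.centers, ∀ i, ContinuousOn (fun z => 𝒜.sec j i (H z)) (N ×ˢ 𝒜.piece j) :=
    fun j hj i => ((𝒜.isLocalSectionFamily j).continuousOn i).comp hH.continuousOn
      fun z hz => 𝒜.mapsTo j hj z.1 hz.1 z.2 hz.2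
  let D (q : 𝒜.centers × ι) : Set (T × A) :=
    N ×ˢ {a ∈ 𝒜.piece q.1 | f a = 𝒜.sec q.1 q.2 (H (t₁, a))}
  have hcover : N ×ˢ univ ⊆ ⋃ q, D q := fun z hz =>
    mem_iUnion.2 ⟨(⟨J z.2, hJ z.2⟩, I z.2), hz.1, hJa z.2, hI z.2⟩
  refine ((locallyFinite_of_finite D).continuousOn_iUnion (fun q => ?_) fun q => ?_).mono hcover
  · have hslice : ContinuousOn (fun a => 𝒜.sec q.1 q.2 (H (t₁, a))) (𝒜.piece q.1) :=
      (hsec q.1 q.1.2 q.2).comp (Continuous.prodMk_right t₁).continuousOn fun a ha => ⟨ht₁, ha⟩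
    exact hN.prod ((hf.continuousOn.prodMk hslice).preimage_isClosed_of_isClosed
      (𝒜.isClosed_piece q.1) isClosed_diagonal)
  · exact ((hsec q.1 q.1.2 q.2).mono (prod_mono le_rfl fun a ha => ha.1)).congr
      fun z hz => hF q.1 q.1.2 q.2 z.2 hz.2.1 hz.2.2 z.1 hz.1

end Transport

section LiftProd

variable {A T : Type*} [TopologicalSpace A] [TopologicalSpace T] [T2Space E] [CompactSpace A]
  [RegularSpace A] [RegularSpace T] {H : T × A → B} {a₀ : A} {g : T → E}

theorem IsCoveringOfDegree.exists_nhds_lift (hp : IsCoveringOfDegree k p) (hH : Continuous H)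
    (hg : Continuous g) (hgH : ∀ t, p (g t) = H (t, a₀)) (t₀ : T) :
    ∃ N ∈ 𝓝 t₀, ∀ t₁ ∈ N, ∀ f : A → E, Continuous f → (∀ a, p (f a) = H (t₁, a)) →
      f a₀ = g t₁ → ∃ F : T × A → E, ContinuousOn F (N ×ˢ univ) ∧
        (∀ t ∈ N, ∀ a, p (F (t, a)) = H (t, a)) ∧ (∀ a, F (t₁, a) = f a) ∧
        ∀ t ∈ N, F (t, a₀) = g t := by
  obtain ⟨N, hN, hNc, ⟨𝒜⟩⟩ := hp.exists_liftAtlas hH t₀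
  obtain ⟨j, hj, ha₀⟩ := 𝒜.exists_mem_piece a₀
  have hbase : ∀ᶠ t in 𝓝 t₀, H (t, a₀) ∈ 𝒜.base j :=
    mem_of_superset hN fun t ht => 𝒜.mapsTo j hj t ht a₀ ha₀
  -- near `t₀`, `g` stays on whichever sheet over `𝒜.base j` it starts on
  have hg_sheet : ∀ᶠ t in 𝓝 t₀, ∀ i,
      (𝒜.sec j i (H (t, a₀)) = g t ↔ 𝒜.sec j i (H (t₀, a₀)) = g t₀) :=
    eventually_all.2 fun i => hp.isLocalHomeomorph.isLocallyInjective.eventually_eq_iff_of_comp_eq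
      ((((𝒜.isLocalSectionFamily j).continuousOn i).continuousAt
        ((𝒜.isOpen_base j).mem_nhds hbase.self_of_nhds)).comp_of_eq
          (hH.comp (Continuous.prodMk_left a₀)).continuousAt rfl) hg.continuousAt
      (hbase.mono fun t ht => by rw [(𝒜.isLocalSectionFamily j).proj_apply i _ ht, hgH])
  refine ⟨N ∩ {t | _}, inter_mem hN hg_sheet, fun t₁ ht₁ f hf hfH hfg => ?_⟩
  obtain ⟨F, hFc, hFH, hFf, hFsec⟩ := 𝒜.exists_lift hH hNc ht₁.1 hf hfH
  obtain ⟨i, hi⟩ := (𝒜.isLocalSectionFamily j).exists_eq (f a₀)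
    (hfH a₀ ▸ 𝒜.mapsTo j hj t₁ ht₁.1 a₀ ha₀)
  rw [hfH] at hi
  refine ⟨F, hFc.mono (prod_mono inter_subset_left le_rfl), fun t ht => hFH t ht.1, hFf,
    fun t ht => ?_⟩
  rw [hFsec j hj i a₀ ha₀ hi.symm t ht.1]
  exact (ht.2 i).2 ((ht₁.2 i).1 (hi.trans hfg))

theorem IsCoveringOfDegree.exists_lift_prod [PreconnectedSpace A] [PreconnectedSpace T]
    (hp : IsCoveringOfDegree k p) (hH : Continuous H) (hg : Continuous g)
    (hgH : ∀ t, p (g t) = H (t, a₀)) {t₀ : T} {f₀ : A → E} (hf₀ : Continuous f₀)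
    (hf₀H : ∀ a, p (f₀ a) = H (t₀, a)) (h₀ : f₀ a₀ = g t₀) :
    ∃ F : T × A → E, Continuous F ∧ (∀ z, p (F z) = H z) ∧ (∀ t, F (t, a₀) = g t) ∧
      ∀ a, F (t₀, a) = f₀ a := by
  choose N hN hNF using hp.exists_nhds_lift hH hg hgH
  let S := {t | ∃ f : A → E, Continuous f ∧ (∀ a, p (f a) = H (t, a)) ∧ f a₀ = g t}
  have htransport : ∀ t, ∀ t₁ ∈ N t, ∀ t₂ ∈ N t, t₁ ∈ S → t₂ ∈ S := by
    rintro t t₁ ht₁ t₂ ht₂ ⟨f, hf, hfH, hfg⟩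
    obtain ⟨F, hFc, hFH, -, hFg⟩ := hNF t t₁ ht₁ f hf hfH hfg
    exact ⟨fun a => F (t₂, a), hFc.comp_continuous (Continuous.prodMk_right t₂)
      fun a => ⟨ht₂, mem_univ a⟩, hFH t₂ ht₂, hFg t₂ ht₂⟩
  have hS : ∀ t, t ∈ S := by
    have hlc : IsLocallyConstant (· ∈ S) := (IsLocallyConstant.iff_eventually_eq _).2 fun t =>
      mem_of_superset (hN t) fun t' ht' => propext
        ⟨htransport t t' ht' t (mem_of_mem_nhds (hN t)),
          htransport t t (mem_of_mem_nhds (hN t)) t' ht'⟩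
    exact fun t => (hlc.apply_eq_of_preconnectedSpace t₀ t).mp ⟨f₀, hf₀, hf₀H, h₀⟩
  choose f hf hfH hfg using hS
  refine ⟨fun z => f z.1 z.2, continuous_iff_continuousAt.2 fun ⟨t, a⟩ => ?_,
    fun z => hfH z.1 z.2, hfg, fun a => ?_⟩
  · obtain ⟨F, hFc, hFH, -, hFg⟩ :=
      hNF t t (mem_of_mem_nhds (hN t)) (f t) (hf t) (hfH t) (hfg t)
    have hnhds : N t ×ˢ univ ∈ 𝓝 (t, a) := prod_mem_nhds (hN t) univ_mem
    refine (hFc.continuousAt hnhds).congr (mem_of_superset hnhds fun z hz => ?_)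
    have hslice : Continuous fun a => F (z.1, a) :=
      hFc.comp_continuous (Continuous.prodMk_right z.1) fun a => ⟨hz.1, mem_univ a⟩
    exact congrFun (hp.eq_of_comp_eq hslice (hf z.1)
      (funext fun a => (hFH z.1 hz.1 a).trans (hfH z.1 a).symm) a₀
      ((hFg z.1 hz.1).trans (hfg z.1).symm)) z.2
  · exact congrFun (hp.eq_of_comp_eq (hf t₀) hf₀
      (funext fun a => (hfH t₀ a).trans (hf₀H a).symm) a₀ ((hfg t₀).trans h₀.symm)) a

end LiftProd

theorem continuous_of_isClosed_graph {X Y : Type*} [TopologicalSpace X] [TopologicalSpace Y]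
    [CompactSpace Y] {f : X → Y} (hf : IsClosed {z : X × Y | z.2 = f z.1}) : Continuous f := by
  refine continuous_iff_isClosed.2 fun C hC => ?_
  convert isClosedMap_fst_of_compactSpace _ (hf.inter (isClosed_univ.prod hC)) using 1
  ext x
  simp

theorem IsCoveringOfDegree.surjective_of_comp_eq [CompactSpace E] [T2Space E]
    [PreconnectedSpace E] [Nonempty E] (hp : IsCoveringOfDegree k p) (h : B ≃ₜ B) {L : E → E}
    (hL : Continuous L) (hpL : p ∘ L = h ∘ p) : Function.Surjective L := by
  have hLopen : IsOpenMap L := (IsLocalHomeomorph.of_comp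
    (hpL ▸ h.isLocalHomeomorph.comp hp.isLocalHomeomorph) hp.isLocalHomeomorph hL).isOpenMap
  have hrange : IsClopen (range L) := ⟨(isCompact_range hL).isClosed, hLopen.isOpen_range⟩
  exact range_eq_univ.1 (hrange.eq_univ (range_nonempty L))

end CoveringLifts

theorem covering_group_theorem_abelian_general
    {X G : Type*} [TopologicalSpace G] [CommGroup G] [IsTopologicalGroup G]
    [CompactSpace G]
    [TopologicalSpace X] [ConnectedSpace X] [T2Space X]
    (k : ℕ) (p : X → G) (hp : IsCoveringOfDegree k p)
    (e' : X) (he : p e' = 1) :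
    ∃ gr : CommGroup X, gr.one = e' ∧ (@IsTopologicalGroup X _ gr.toGroup) ∧
      ∀ x y : X, p (gr.mul x y) = p x * p y := by
  have : CompactSpace X := hp.compactSpace
  have hpc : Continuous p := hp.1
  obtain ⟨μ, hμ, hμp, hμ_one, hone_μ⟩ :=
    hp.exists_lift_prod (H := fun z => p z.1 * p z.2) (a₀ := e') (t₀ := e') (by fun_prop)
      continuous_id (fun x => by simp [he]) continuous_id (fun x => by simp [he]) rfl
  have hcomm : ∀ x y, μ (x, y) = μ (y, x) := fun x y => congrFun (hp.eq_of_comp_eq hμ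
    (hμ.comp continuous_swap) (funext fun z => by simp [hμp, mul_comm]) (e', e') rfl) (x, y)
  have hassoc : ∀ x y z, μ (μ (x, y), z) = μ (x, μ (y, z)) := fun x y z => congrFun
    (hp.eq_of_comp_eq (g₁ := fun w : X × X × X => μ (μ (w.1, w.2.1), w.2.2))
      (g₂ := fun w => μ (w.1, μ (w.2.1, w.2.2))) (by fun_prop) (by fun_prop)
      (funext fun w => by simp [hμp, mul_assoc]) (e', e', e') (by simp [hμ_one]))
    (x, y, z)
  let M : CommMonoid X :=
    { mul := fun x y => μ (x, y), one := e', mul_assoc := hassoc, one_mul := hone_μ,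
      mul_one := hμ_one, mul_comm := hcomm }
  have hunit (x : X) : IsUnit x := by
    obtain ⟨y, hy⟩ := hp.surjective_of_comp_eq (Homeomorph.mulLeft (p x))
      (hμ.comp (Continuous.prodMk_right x)) (funext fun y => hμp (x, y)) e'
    exact .of_mul_eq_one y hy
  let : CommGroup X := commGroupOfIsUnit hunit
  have : ContinuousMul X := ⟨hμ⟩
  have : ContinuousInv X := ⟨continuous_of_isClosed_graph <| by
    simp_rw [eq_inv_iff_mul_eq_one]
    exact isClosed_eq (continuous_snd.mul continuous_fst) continuous_const⟩
  exact ⟨_, rfl, {}, fun x y => hμp (x, y)⟩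

/-- Abelian covering group theorem: a finite-sheeted covering of a compact connected
abelian Hausdorff topological group from a connected Hausdorff space carries an abelian
topological group structure making the covering map a homomorphism. -/
theorem covering_group_theorem_abelian
    {X G : Type*} [TopologicalSpace G] [CommGroup G] [IsTopologicalGroup G]
    [CompactSpace G] [ConnectedSpace G] [T2Space G]
    [TopologicalSpace X] [ConnectedSpace X] [T2Space X]
    (k : ℕ) (hk : 0 < k) (p : X → G) (hp : IsCoveringOfDegree k p)
    (e' : X) (he : p e' = 1) :
    ∃ gr : CommGroup X, gr.one = e' ∧ (@IsTopologicalGroup X _ gr.toGroup) ∧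
      ∀ x y : X, p (gr.mul x y) = p x * p y :=
  covering_group_theorem_abelian_general k p hp e' he
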